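/- Let B, C, D be unital C*-algebras and let δ : B → D, γ : C → D be unital *-homomorphisms with at least one of γ, δ surjective, and let A = B ⊕_D C = {(b,c) ∈ B ⊕ C : δ(b) = γ(c)} be the pullback C*-algebra. Then gsr(A) ≤ max{csr(B), csr(C), inj_0(D)} (as elements of ℕ ∪ {∞}). -/

import Mathlib

open scoped unitInterval

noncomputable section

/-- The set of left unimodular vectors in `A^m`. -/
def Lg (m : ℕ) (A : Type*) [Ring A] : Set (Fin m → A) :=
  {v | ∃ w : Fin m → A, ∑ i, w i * v i = 1}

/-- `GL_m(A)` acts transitively on `Lg_m(A)`. -/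
def GLtrans (m : ℕ) (A : Type*) [Ring A] : Prop :=
  ∀ v ∈ Lg m A, ∀ w ∈ Lg m A,
    ∃ M : Matrix (Fin m) (Fin m) A, IsUnit M ∧ M.mulVec v = w

/-- The general stable rank: the least `n ≥ 1` such that `GL_m(A)` acts transitively on
`Lg_m(A)` for all `m ≥ n` (and `∞` if no such `n` exists). -/
def gsr (A : Type*) [Ring A] : ℕ∞ :=
  sInf {N : ℕ∞ | ∃ n : ℕ, N = n ∧ 1 ≤ n ∧ ∀ m : ℕ, n ≤ m → GLtrans m A}

/-- The connected stable rank: the least `n ≥ 1` such that `Lg_m(A)` is connected for all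
`m ≥ n` (and `∞` if no such `n` exists). -/
def csr (A : Type*) [Ring A] [TopologicalSpace A] : ℕ∞ :=
  sInf {N : ℕ∞ | ∃ n : ℕ, N = n ∧ 1 ≤ n ∧ ∀ m : ℕ, n ≤ m → IsConnected (Lg m A)}

/-- Invertible `m × m` matrices over `A`, topologized as a subspace of the matrices. -/
abbrev GLs (m : ℕ) (A : Type*) [Ring A] : Type _ :=
  {M : Matrix (Fin m) (Fin m) A // IsUnit M}

/-- The identity matrix as base point of `GL_m(A)`. -/
def GLone (m : ℕ) (A : Type*) [Ring A] : GLs m A := ⟨1, isUnit_one⟩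

/-- The stabilization map `M ↦ diag(M, 1)` on matrices. -/
def stab {A : Type*} [Ring A] {n : ℕ} (M : Matrix (Fin n) (Fin n) A) :
    Matrix (Fin (n + 1)) (Fin (n + 1)) A :=
  (Matrix.fromBlocks M 0 0 (1 : Matrix (Fin 1) (Fin 1) A)).submatrix
    finSumFinEquiv.symm finSumFinEquiv.symm

theorem stab_one {A : Type*} [Ring A] {n : ℕ} :
    stab (1 : Matrix (Fin n) (Fin n) A) = 1 := by
  rw [stab, Matrix.fromBlocks_one, Matrix.submatrix_one_equiv]

theorem stab_mul {A : Type*} [Ring A] {n : ℕ} (M N : Matrix (Fin n) (Fin n) A) :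
    stab M * stab N = stab (M * N) := by
  rw [stab, stab, stab, Matrix.submatrix_mul_equiv, Matrix.fromBlocks_multiply]
  simp

theorem stab_isUnit {A : Type*} [Ring A] {n : ℕ} {M : Matrix (Fin n) (Fin n) A}
    (h : IsUnit M) : IsUnit (stab M) := by
  obtain ⟨u, rfl⟩ := h
  refine isUnit_iff_exists.mpr ⟨stab (u⁻¹ : (Matrix (Fin n) (Fin n) A)ˣ).val, ?_, ?_⟩
  · rw [stab_mul, Units.mul_inv, stab_one]
  · rw [stab_mul, Units.inv_mul, stab_one]

theorem continuous_stab {A : Type*} [Ring A] [TopologicalSpace A] {n : ℕ} :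
    Continuous fun M : Matrix (Fin n) (Fin n) A => stab M := by
  unfold stab
  exact (continuous_id.matrix_fromBlocks continuous_const continuous_const
    continuous_const).matrix_submatrix _ _

/-- The stabilization map `θ : GL_n(A) → GL_{n+1}(A)`, `M ↦ diag(M, 1)`. -/
def stabGL {A : Type*} [Ring A] {n : ℕ} (M : GLs n A) : GLs (n + 1) A :=
  ⟨stab M.1, stab_isUnit M.2⟩

theorem stabGL_one {A : Type*} [Ring A] {n : ℕ} :
    stabGL (GLone n A) = GLone (n + 1) A :=
  Subtype.ext stab_one

theorem continuous_stabGL {A : Type*} [Ring A] [TopologicalSpace A] {n : ℕ} :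
    Continuous (stabGL (A := A) (n := n)) :=
  Continuous.subtype_mk (continuous_stab.comp continuous_subtype_val) _

/-- Stabilization as a continuous map `GL_n(A) → GL_{n+1}(A)`. -/
def stabCM (n : ℕ) (A : Type*) [Ring A] [TopologicalSpace A] :
    ContinuousMap (GLs n A) (GLs (n + 1) A) :=
  ⟨stabGL, continuous_stabGL⟩

theorem stabCM_one {A : Type*} [Ring A] [TopologicalSpace A] {n : ℕ} :
    stabCM n A (GLone n A) = GLone (n + 1) A :=
  stabGL_one

/-- Push a generalized loop forward along a based continuous map. -/
def GenLoop.push {N X Y : Type*} [TopologicalSpace X] [TopologicalSpace Y]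
    {x : X} {y : Y} (f : ContinuousMap X Y) (hf : f x = y)
    (p : GenLoop N X x) : GenLoop N Y y :=
  ⟨f.comp p.1, fun t ht => by
    simp only [ContinuousMap.comp_apply]
    rw [p.2 t ht, hf]⟩

/-- The map `π_k(GL_m(A)) → π_k(GL_{m+1}(A))` (based at the identity matrices) induced by
the stabilization map is injective. -/
def pikInj (k : ℕ) (A : Type*) [Ring A] [TopologicalSpace A] (m : ℕ) : Prop :=
  ∀ a b : GenLoop (Fin k) (GLs m A) (GLone m A),
    GenLoop.Homotopic (GenLoop.push (stabCM m A) stabCM_one a)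
      (GenLoop.push (stabCM m A) stabCM_one b) → GenLoop.Homotopic a b

/-- The map `π_k(GL_m(A)) → π_k(GL_{m+1}(A))` (based at the identity matrices) induced by
the stabilization map is surjective. -/
def pikSurj (k : ℕ) (A : Type*) [Ring A] [TopologicalSpace A] (m : ℕ) : Prop :=
  ∀ b : GenLoop (Fin k) (GLs (m + 1) A) (GLone (m + 1) A),
    ∃ a : GenLoop (Fin k) (GLs m A) (GLone m A),
      GenLoop.Homotopic (GenLoop.push (stabCM m A) stabCM_one a) b

/-- `inj_k(A)`: the least `n ≥ 1` such that `π_k(GL_{m-1}(A)) → π_k(GL_m(A))` is injective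
for all `m ≥ n` (and `∞` if no such `n` exists). -/
def injRank (k : ℕ) (A : Type*) [Ring A] [TopologicalSpace A] : ℕ∞ :=
  sInf {N : ℕ∞ | ∃ n : ℕ, N = n ∧ 1 ≤ n ∧ ∀ m : ℕ, n ≤ m + 1 → pikInj k A m}

/-- `surj_k(A)`: the least `n ≥ 1` such that `π_k(GL_{m-1}(A)) → π_k(GL_m(A))` is surjective
for all `m ≥ n` (and `∞` if no such `n` exists). -/
def surjRank (k : ℕ) (A : Type*) [Ring A] [TopologicalSpace A] : ℕ∞ :=
  sInf {N : ℕ∞ | ∃ n : ℕ, N = n ∧ 1 ≤ n ∧ ∀ m : ℕ, n ≤ m + 1 → pikSurj k A m}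

/-- The pullback `B ⊕_D C` as a star subalgebra of `B × C`. -/
def pullbackAlg {B C D : Type*} [Ring B] [Ring C] [Ring D]
    [Algebra ℂ B] [Algebra ℂ C] [Algebra ℂ D]
    [StarRing B] [StarRing C] [StarRing D]
    [StarModule ℂ B] [StarModule ℂ C] [StarModule ℂ D]
    (δ : B →⋆ₐ[ℂ] D) (γ : C →⋆ₐ[ℂ] D) : StarSubalgebra ℂ (B × C) where
  carrier := {x | δ x.1 = γ x.2}
  mul_mem' {a b} ha hb := by
    simp only [Set.mem_setOf_eq, Prod.fst_mul, Prod.snd_mul, map_mul] at *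
    rw [ha, hb]
  one_mem' := by simp
  add_mem' {a b} ha hb := by
    simp only [Set.mem_setOf_eq, Prod.fst_add, Prod.snd_add, map_add] at *
    rw [ha, hb]
  zero_mem' := by simp
  algebraMap_mem' r := by
    simp only [Set.mem_setOf_eq]
    show δ ((algebraMap ℂ (B × C)) r).1 = γ ((algebraMap ℂ (B × C)) r).2
    simp only [Prod.algebraMap_apply]
    rw [AlgHomClass.commutes, AlgHomClass.commutes]
  star_mem' {a} ha := by
    simp only [Set.mem_setOf_eq, Prod.fst_star, Prod.snd_star, map_star] at *
    rw [ha]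


set_option linter.unusedSectionVars false
set_option linter.unusedVariables false
set_option maxHeartbeats 2000000
set_option synthInstance.maxHeartbeats 1000000

open Matrix Function
open scoped NNReal CStarAlgebra

attribute [local instance] Matrix.linftyOpNormedRing Matrix.linftyOpNormedAlgebra
  Matrix.linftyOpNormedSpace Matrix.linftyOpNormedAddCommGroup

instance instCompleteSpaceMatrixFin {E : Type*} [NormedRing E] [CompleteSpace E] {k : ℕ} :
    @CompleteSpace (Matrix (Fin k) (Fin k) E) PseudoMetricSpace.toUniformSpace :=
  inferInstanceAs (CompleteSpace (Fin k → Fin k → E))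

/-- Joined-to-one predicate on invertible matrices. -/
def Jd {m : ℕ} {E : Type*} [Ring E] [TopologicalSpace E] (M : GLs m E) : Prop :=
  Joined (GLone m E) M

theorem isUnit_one_add_of_norm_lt {R : Type*} [NormedRing R] [CompleteSpace R]
    {x : R} (h : ‖x‖ < 1) : IsUnit (1 + x) := by
  have := (Units.oneSub (-x) (by simpa using h)).isUnit
  simpa [sub_neg_eq_add] using this

theorem isUnit_one_add_of_sq_eq_zero {R : Type*} [Ring R] {x : R} (h : x * x = 0) :
    IsUnit (1 + x) := by
  have e1 : (1 + x) * (1 - x) = 1 - x * x := by noncomm_ring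
  have e2 : (1 - x) * (1 + x) = 1 - x * x := by noncomm_ring
  exact isUnit_iff_exists.mpr ⟨1 - x, by rw [e1, h, sub_zero], by rw [e2, h, sub_zero]⟩

section PartA
variable {E : Type*} [NormedRing E] [CompleteSpace E] {m : ℕ}

theorem jd_one : Jd (GLone m E) := Joined.refl _

theorem jd_mul {M N : GLs m E} (hM : Jd M) (hN : Jd N) :
    Jd (⟨M.1 * N.1, M.2.mul N.2⟩ : GLs m E) := by
  obtain ⟨p⟩ := hM
  obtain ⟨q⟩ := hN
  refine ⟨⟨⟨fun t => ⟨(p t).1 * (q t).1, (p t).2.mul (q t).2⟩, ?_⟩, ?_, ?_⟩⟩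
  · exact Continuous.subtype_mk
      (Continuous.matrix_mul (continuous_subtype_val.comp p.continuous)
        (continuous_subtype_val.comp q.continuous)) _
  · simp [GLone]
    erw [p.source, q.source]
    simp [GLone]
  · simp

theorem jd_inverse {M : GLs m E} (hM : Jd M) :
    Jd (⟨Ring.inverse M.1, isUnit_ringInverse.mpr M.2⟩ : GLs m E) := by
  obtain ⟨p⟩ := hM
  have hcont : Continuous fun t : unitInterval => Ring.inverse ((p t).1) := by
    rw [continuous_iff_continuousAt]
    intro t
    have h1 : ContinuousAt Ring.inverse ((p t).1) := by
      rcases (p t).2 with ⟨u, hu⟩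
      exact hu ▸ NormedRing.inverse_continuousAt u
    have h2 : ContinuousAt (fun s : unitInterval => ((p s).1 : Matrix (Fin m) (Fin m) E)) t :=
      (continuous_subtype_val.comp p.continuous).continuousAt
    exact ContinuousAt.comp (f := fun s : unitInterval => ((p s).1 : Matrix (Fin m) (Fin m) E)) h1 h2
  refine ⟨⟨⟨fun t => ⟨Ring.inverse ((p t).1), isUnit_ringInverse.mpr (p t).2⟩,
    hcont.subtype_mk _⟩, Subtype.ext ?_, Subtype.ext ?_⟩⟩
  · show Ring.inverse ((p 0).1) = _
    rw [p.source]
    simp [GLone]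
  · show Ring.inverse ((p 1).1) = _
    rw [p.target]

theorem jd_map {F : Type*} [NormedRing F] [CompleteSpace F]
    (f : Matrix (Fin m) (Fin m) E →+* Matrix (Fin m) (Fin m) F)
    (hf : Continuous f) {M : GLs m E} (hM : Jd M) :
    Jd (⟨f M.1, M.2.map f⟩ : GLs m F) := by
  obtain ⟨p⟩ := hM
  refine ⟨⟨⟨fun t => ⟨f (p t).1, (p t).2.map f⟩,
    (hf.comp (continuous_subtype_val.comp p.continuous)).subtype_mk _⟩, ?_, ?_⟩⟩
  · apply Subtype.ext; simp [GLone]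
    erw [p.source]
    simp [GLone]
  · apply Subtype.ext; simp

theorem jd_of_segment [NormedSpace ℝ E] {X : Matrix (Fin m) (Fin m) E}
    (h : ∀ t : ℝ, t ∈ Set.Icc (0:ℝ) 1 → IsUnit (1 + t • X)) :
    Jd (⟨1 + X, by simpa using h 1 (by norm_num)⟩ : GLs m E) := by
  refine ⟨⟨⟨fun t => ⟨1 + (t : ℝ) • X, h t ⟨t.2.1, t.2.2⟩⟩, ?_⟩, ?_, ?_⟩⟩
  · refine Continuous.subtype_mk (continuous_const.add ?_) _
    exact (continuous_subtype_val.smul continuous_const)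
  · apply Subtype.ext; simp [GLone]
  · apply Subtype.ext; simp

theorem jd_one_add_of_norm_lt [NormedSpace ℝ E] {X : Matrix (Fin m) (Fin m) E}
    (h : ‖X‖ < 1) :
    Jd (⟨1 + X, isUnit_one_add_of_norm_lt h⟩ : GLs m E) := by
  have := jd_of_segment (E := E) (X := X) (fun t ht => by
    apply isUnit_one_add_of_norm_lt
    rw [norm_smul]
    calc ‖t‖ * ‖X‖ ≤ 1 * ‖X‖ := by
          apply mul_le_mul_of_nonneg_right _ (norm_nonneg _)
          rw [Real.norm_eq_abs, abs_le]; constructor <;> linarith [ht.1, ht.2]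
      _ = ‖X‖ := one_mul _
      _ < 1 := h)
  exact this

theorem jd_one_add_of_sq_eq_zero [NormedSpace ℝ E] [SMulCommClass ℝ E E] [IsScalarTower ℝ E E]
    {X : Matrix (Fin m) (Fin m) E} (h : X * X = 0) :
    Jd (⟨1 + X, isUnit_one_add_of_sq_eq_zero h⟩ : GLs m E) := by
  refine jd_of_segment (fun t ht => isUnit_one_add_of_sq_eq_zero ?_)
  rw [smul_mul_smul_comm, h, smul_zero]
end PartA

section PartB
variable {E : Type*} [NormedRing E] [CompleteSpace E] {m : ℕ}
theorem norm_vecMulVec_le (a : Fin m → E) (b : Fin m → E) :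
    ‖vecMulVec a b‖ ≤ ‖a‖ * ∑ j, ‖b j‖ := by
  have h : ‖vecMulVec a b‖₊ ≤ ‖a‖₊ * ∑ j, ‖b j‖₊ := by
    rw [linfty_opNNNorm_def]
    apply Finset.sup_le
    intro i _
    calc ∑ j, ‖vecMulVec a b i j‖₊ ≤ ∑ j, ‖a i‖₊ * ‖b j‖₊ := by
          apply Finset.sum_le_sum
          intro j _
          rw [vecMulVec_apply]
          exact nnnorm_mul_le _ _
      _ = ‖a i‖₊ * ∑ j, ‖b j‖₊ := by rw [Finset.mul_sum]
      _ ≤ ‖a‖₊ * ∑ j, ‖b j‖₊ := by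
          apply mul_le_mul_left
          exact nnnorm_le_pi_nnnorm a i
  calc ‖vecMulVec a b‖ = ((‖vecMulVec a b‖₊ : ℝ≥0) : ℝ) := rfl
    _ ≤ ((‖a‖₊ * ∑ j, ‖b j‖₊ : ℝ≥0) : ℝ) := by exact_mod_cast h
    _ = ‖a‖ * ∑ j, ‖b j‖ := by push_cast; rfl

theorem jd_step [NormedSpace ℝ E] {x y x' : Fin m → E}
    (hx : ∑ i, x' i * x i = 1)
    (hsmall : ‖y - x‖ * ∑ j, ‖x' j‖ < 1) :
    ∃ M : GLs m E, Jd M ∧ M.1.mulVec x = y := by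
  set X := vecMulVec (y - x) x' with hXdef
  have hX : ‖X‖ < 1 := lt_of_le_of_lt (norm_vecMulVec_le _ _) hsmall
  refine ⟨⟨1 + X, isUnit_one_add_of_norm_lt hX⟩, jd_one_add_of_norm_lt hX, ?_⟩
  show (1 + X) *ᵥ x = y
  rw [add_mulVec, one_mulVec]
  have hXx : X *ᵥ x = y - x := by
    funext i
    show ∑ j, X i j * x j = (y - x) i
    have : ∀ j, X i j * x j = (y - x) i * (x' j * x j) := by
      intro j
      rw [hXdef, vecMulVec_apply, mul_assoc]
    rw [Finset.sum_congr rfl fun j _ => this j, ← Finset.mul_sum, hx, mul_one]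
  rw [hXx]
  funext i
  simp

theorem exists_jd_mulVec_eq [NormedSpace ℝ E]
    (hconn : IsConnected (Lg m E)) {v w : Fin m → E} (hv : v ∈ Lg m E) (hw : w ∈ Lg m E) :
    ∃ M : GLs m E, Jd M ∧ M.1.mulVec v = w := by
  haveI := Subtype.connectedSpace hconn
  set S : Set (Lg m E) := {y | ∃ M : GLs m E, Jd M ∧ M.1.mulVec v = y.1} with hS
  have key : ∀ y : Lg m E, ∃ ε > 0, ∀ z : Lg m E, dist z y < ε →
      ∃ N : GLs m E, Jd N ∧ N.1.mulVec y.1 = z.1 := by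
    intro y
    obtain ⟨y', hy'⟩ := y.2
    refine ⟨((∑ j, ‖y' j‖) + 1)⁻¹, by positivity, fun z hz => ?_⟩
    apply jd_step hy'
    have hc : (0:ℝ) ≤ ∑ j, ‖y' j‖ := Finset.sum_nonneg fun j _ => norm_nonneg _
    have hdist : ‖z.1 - y.1‖ < ((∑ j, ‖y' j‖) + 1)⁻¹ := by
      rw [← dist_eq_norm]
      exact lt_of_eq_of_lt (Subtype.dist_eq z y).symm hz
    calc ‖z.1 - y.1‖ * ∑ j, ‖y' j‖ ≤ ‖z.1 - y.1‖ * ((∑ j, ‖y' j‖) + 1) := by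
          apply mul_le_mul_of_nonneg_left (by linarith) (norm_nonneg _)
      _ < ((∑ j, ‖y' j‖) + 1)⁻¹ * ((∑ j, ‖y' j‖) + 1) := by
          apply mul_lt_mul_of_pos_right hdist (by positivity)
      _ = 1 := by field_simp
  have hopen : IsOpen S := by
    rw [Metric.isOpen_iff]
    rintro y ⟨M, hM, hMv⟩
    obtain ⟨ε, hε, hkey⟩ := key y
    refine ⟨ε, hε, fun z hz => ?_⟩
    obtain ⟨N, hN, hNy⟩ := hkey z hz
    exact ⟨⟨N.1 * M.1, N.2.mul M.2⟩, jd_mul hN hM, by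
      show (N.1 * M.1) *ᵥ v = z.1
      rw [← mulVec_mulVec, hMv, hNy]⟩
  have hclosed : IsOpen Sᶜ := by
    rw [Metric.isOpen_iff]
    intro y hy
    obtain ⟨ε, hε, hkey⟩ := key y
    refine ⟨ε, hε, fun z hz hzS => hy ?_⟩
    obtain ⟨M, hM, hMv⟩ := hzS
    obtain ⟨N, hN, hNy⟩ := hkey z hz
    refine ⟨⟨Ring.inverse N.1 * M.1, (isUnit_ringInverse.mpr N.2).mul M.2⟩,
      jd_mul (jd_inverse hN) hM, ?_⟩
    show (Ring.inverse N.1 * M.1) *ᵥ v = y.1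
    rw [← mulVec_mulVec, hMv, ← hNy, mulVec_mulVec, Ring.inverse_mul_cancel _ N.2, one_mulVec]
  have huniv : S = Set.univ := by
    apply IsClopen.eq_univ ⟨by rw [← isOpen_compl_iff]; exact hclosed, hopen⟩
    exact ⟨⟨v, hv⟩, ⟨GLone m E, jd_one, one_mulVec v⟩⟩
  have : (⟨w, hw⟩ : Lg m E) ∈ S := huniv ▸ Set.mem_univ _
  exact this
end PartB

section PartC
variable {C D : Type*} [CStarAlgebra C] [CStarAlgebra D]

theorem exists_norm_preimage (γ : C →⋆ₐ[ℂ] D) (hγ : Function.Surjective γ) (k : ℕ) :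
    ∃ K > 0, ∀ x : Matrix (Fin k) (Fin k) D, ∃ y : Matrix (Fin k) (Fin k) C,
      y.map γ = x ∧ ‖y‖ ≤ K * ‖x‖ := by
  let base : C →ₗ[ℝ] D := LinearMap.restrictScalars ℝ γ.toLinearMap
  let L : Matrix (Fin k) (Fin k) C →ₗ[ℝ] Matrix (Fin k) (Fin k) D := base.mapMatrix
  have hbound : ∀ M : Matrix (Fin k) (Fin k) C, ‖L M‖ ≤ 1 * ‖M‖ := by
    intro M
    rw [one_mul]
    have h : ‖L M‖₊ ≤ ‖M‖₊ := by
      rw [show ‖L M‖₊ = ‖M.map γ‖₊ from rfl, linfty_opNNNorm_def, linfty_opNNNorm_def]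
      apply Finset.sup_le
      intro i _
      calc ∑ j, ‖(M.map γ) i j‖₊ ≤ ∑ j, ‖M i j‖₊ := by
            apply Finset.sum_le_sum
            intro j _
            exact NonUnitalStarAlgHom.nnnorm_apply_le γ (M i j)
        _ ≤ Finset.univ.sup fun i => ∑ j, ‖M i j‖₊ := Finset.le_sup (f := fun i => ∑ j, ‖M i j‖₊) (Finset.mem_univ i)
    exact_mod_cast h
  let Γ := L.mkContinuous 1 hbound
  have hΓ : ∀ M, Γ M = M.map γ := fun M => rfl
  have hsurj : Function.Surjective Γ := by
    intro x
    refine ⟨Matrix.of fun i j => surjInv hγ (x i j), ?_⟩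
    rw [hΓ]
    ext i j
    exact surjInv_eq hγ _
  obtain ⟨K, hK0, hK⟩ := Γ.exists_preimage_norm_le hsurj
  exact ⟨K, hK0, fun x => by
    obtain ⟨y, h1, h2⟩ := hK x
    exact ⟨y, by rw [← hΓ]; exact h1, h2⟩⟩

theorem map_one_add (γ : C →⋆ₐ[ℂ] D) {k : ℕ} (y : Matrix (Fin k) (Fin k) C) :
    (1 + y).map γ = 1 + y.map γ := by
  ext i j
  simp [Matrix.map_apply, Matrix.add_apply, Matrix.one_apply, apply_ite γ, _root_.map_one, map_zero]

theorem exists_isUnit_map_eq (γ : C →⋆ₐ[ℂ] D) (hγ : Function.Surjective γ) {k : ℕ}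
    (U : GLs k D) (hU : Jd U) :
    ∃ V : Matrix (Fin k) (Fin k) C, IsUnit V ∧ V.map γ = U.1 := by
  obtain ⟨K, hK0, hK⟩ := exists_norm_preimage γ hγ k
  set S : Set (GLs k D) := {U : GLs k D | ∃ V : Matrix (Fin k) (Fin k) C, IsUnit V ∧ V.map γ = U.1} with hSdef
  have step : ∀ (U₁ U₂ : GLs k D), U₁ ∈ S →
      ‖U₂.1 - U₁.1‖ * ‖Ring.inverse U₁.1‖ * K < 1 → U₂ ∈ S := by
    rintro U₁ U₂ ⟨V₁, hV₁u, hV₁⟩ hsmall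
    set x := (U₂.1 - U₁.1) * Ring.inverse U₁.1 with hxdef
    have hxn : K * ‖x‖ < 1 := by
      have h1 : ‖x‖ ≤ ‖U₂.1 - U₁.1‖ * ‖Ring.inverse U₁.1‖ := norm_mul_le _ _
      have h2 : K * ‖x‖ ≤ ‖U₂.1 - U₁.1‖ * ‖Ring.inverse U₁.1‖ * K := by
        rw [mul_comm]
        exact mul_le_mul_of_nonneg_right h1 (le_of_lt hK0)
      linarith
    obtain ⟨y, hy, hyn⟩ := hK x
    have hyn1 : ‖y‖ < 1 := lt_of_le_of_lt hyn hxn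
    have hxU : (1 + x) * U₁.1 = U₂.1 := by
      rw [add_mul, one_mul, hxdef, mul_assoc, Ring.inverse_mul_cancel _ U₁.2, mul_one]
      abel
    refine ⟨(1 + y) * V₁, (isUnit_one_add_of_norm_lt hyn1).mul hV₁u, ?_⟩
    calc ((1 + y) * V₁).map γ = (1 + y).map γ * V₁.map γ := by
          exact Matrix.map_mul (f := γ.toRingHom)
      _ = (1 + x) * U₁.1 := by rw [map_one_add, hy, hV₁]
      _ = U₂.1 := hxU
  have hball : ∀ (U₁ : GLs k D) (c : ℝ), 0 ≤ c → ∀ U₂ : GLs k D,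
      ‖U₂.1 - U₁.1‖ < ((c + 1) * (K + 1))⁻¹ → ‖Ring.inverse U₁.1‖ ≤ c →
      ‖U₂.1 - U₁.1‖ * ‖Ring.inverse U₁.1‖ * K < 1 := by
    intro U₁ c hc U₂ hd hn
    have h0 : (0:ℝ) < (c + 1) * (K + 1) := by positivity
    calc ‖U₂.1 - U₁.1‖ * ‖Ring.inverse U₁.1‖ * K
        ≤ ‖U₂.1 - U₁.1‖ * ((c + 1) * (K + 1)) := by
          have : ‖Ring.inverse U₁.1‖ * K ≤ (c + 1) * (K + 1) := by nlinarith [norm_nonneg (Ring.inverse U₁.1)]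
          rw [mul_assoc]
          exact mul_le_mul_of_nonneg_left this (norm_nonneg _)
      _ < ((c + 1) * (K + 1))⁻¹ * ((c + 1) * (K + 1)) := mul_lt_mul_of_pos_right hd h0
      _ = 1 := inv_mul_cancel₀ (ne_of_gt h0)
  have hopen : IsOpen S := by
    refine Metric.isOpen_iff.mpr ?_
    intro U₁ hU₁
    refine ⟨((‖Ring.inverse U₁.1‖ + 1) * (K + 1))⁻¹, by positivity, fun U₂ hU₂ => ?_⟩
    rw [Metric.mem_ball, Subtype.dist_eq, dist_eq_norm] at hU₂
    exact step U₁ U₂ hU₁ (hball U₁ _ (by positivity) U₂ hU₂ (by linarith))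
  have hcomp : IsOpen Sᶜ := by
    refine Metric.isOpen_iff.mpr ?_
    intro U₁ hU₁
    have hca : ContinuousAt Ring.inverse (U₁.1 : Matrix (Fin k) (Fin k) D) := by
      rcases U₁.2 with ⟨u, hu⟩
      exact hu ▸ NormedRing.inverse_continuousAt u
    obtain ⟨δ, hδ0, hδ⟩ := Metric.continuousAt_iff.mp hca 1 one_pos
    set c := ‖Ring.inverse U₁.1‖ + 1 with hcdef
    refine ⟨min δ (((c + 1) * (K + 1))⁻¹), by positivity, fun U₂ hU₂ hU₂S => hU₁ ?_⟩
    rw [Metric.mem_ball, Subtype.dist_eq, dist_eq_norm] at hU₂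
    have hd1 : ‖U₂.1 - U₁.1‖ < δ := lt_of_lt_of_le hU₂ (min_le_left _ _)
    have hinv : ‖Ring.inverse U₂.1‖ ≤ c := by
      have := hδ (show dist U₂.1 U₁.1 < δ by rwa [dist_eq_norm])
      rw [dist_eq_norm] at this
      calc ‖Ring.inverse U₂.1‖
          ≤ ‖Ring.inverse U₂.1 - Ring.inverse U₁.1‖ + ‖Ring.inverse U₁.1‖ := by
            simpa using norm_add_le (Ring.inverse U₂.1 - Ring.inverse U₁.1) (Ring.inverse U₁.1)
        _ ≤ c := by rw [hcdef]; linarith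
    have hd2 : ‖U₁.1 - U₂.1‖ < ((c + 1) * (K + 1))⁻¹ := by
      rw [norm_sub_rev]
      exact lt_of_lt_of_le hU₂ (min_le_right _ _)
    exact step U₂ U₁ hU₂S (hball U₂ c (by positivity) U₁ hd2 hinv)
  have h1 : GLone k D ∈ S := by
    refine ⟨1, isUnit_one, ?_⟩
    ext i j
    simp [Matrix.map_apply, Matrix.one_apply, apply_ite γ, _root_.map_one, map_zero, GLone]
  have hsub := IsClopen.connectedComponent_subset
    ⟨by rw [← isOpen_compl_iff]; exact hcomp, hopen⟩ h1
  exact hsub (pathComponent_subset_component _ hU)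
end PartC

section PartD
/-- Constant generalized 0-loop at `z` (with base point `x`). -/
def const0 {X : Type*} [TopologicalSpace X] (x z : X) : GenLoop (Fin 0) X x :=
  ⟨ContinuousMap.const _ z, fun _ ⟨i, _⟩ => i.elim0⟩

theorem homotopic_const0_iff {X : Type*} [TopologicalSpace X] (x z w : X) :
    GenLoop.Homotopic (const0 x z) (const0 x w) ↔ Joined z w := by
  constructor
  · rintro ⟨F⟩
    refine ⟨⟨⟨fun t => F (t, fun i => i.elim0), ?_⟩, ?_, ?_⟩⟩
    · exact F.continuous.comp (continuous_id.prodMk continuous_const)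
    · exact ContinuousMap.HomotopyWith.apply_zero F _
    · exact ContinuousMap.HomotopyWith.apply_one F _
  · rintro ⟨p⟩
    refine ⟨⟨⟨⟨fun q => p q.1, p.continuous.comp continuous_fst⟩, ?_, ?_⟩, ?_⟩⟩
    · intro y; simp [const0]
    · intro y; simp [const0]
    · rintro t y ⟨i, _⟩
      exact i.elim0

theorem push_const0 {X Y : Type*} [TopologicalSpace X] [TopologicalSpace Y]
    {x : X} {y : Y} (f : ContinuousMap X Y) (hf : f x = y) (z : X) :
    GenLoop.push f hf (const0 x z) = const0 y (f z) := by
  apply Subtype.ext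
  ext q
  rfl

theorem joined_of_pikInj {D : Type*} [Ring D] [TopologicalSpace D] {k : ℕ}
    (h : pikInj 0 D k) (M : GLs k D)
    (hM : Joined (GLone (k + 1) D) (stabGL M)) : Joined (GLone k D) M := by
  have hpush1 : GenLoop.push (stabCM k D) stabCM_one (const0 (GLone k D) M)
      = const0 (GLone (k + 1) D) (stabGL M) := push_const0 _ _ _
  have hpush2 : GenLoop.push (stabCM k D) stabCM_one (const0 (GLone k D) (GLone k D))
      = const0 (GLone (k + 1) D) (GLone (k + 1) D) := by
    rw [push_const0]
    congr 1
    exact stabGL_one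
  have hh : GenLoop.Homotopic
      (GenLoop.push (stabCM k D) stabCM_one (const0 (GLone k D) M))
      (GenLoop.push (stabCM k D) stabCM_one (const0 (GLone k D) (GLone k D))) := by
    rw [hpush1, hpush2]
    exact (homotopic_const0_iff _ _ _).mpr hM.symm
  have := h _ _ hh
  exact ((homotopic_const0_iff _ _ _).mp this).symm
end PartD

section PartE
variable {E F : Type*} [Ring E] [Ring F] {k : ℕ}


theorem stab_apply_cc (M : Matrix (Fin k) (Fin k) E) (i j : Fin k) :
    stab M i.castSucc j.castSucc = M i j := by
  rw [stab, Matrix.submatrix_apply]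
  rw [show i.castSucc = Fin.castAdd 1 i from rfl, show j.castSucc = Fin.castAdd 1 j from rfl,
    finSumFinEquiv_symm_apply_castAdd, finSumFinEquiv_symm_apply_castAdd]
  rfl

theorem stab_apply_cl (M : Matrix (Fin k) (Fin k) E) (i : Fin k) :
    stab M i.castSucc (Fin.last k) = 0 := by
  rw [stab, Matrix.submatrix_apply]
  rw [show i.castSucc = Fin.castAdd 1 i from rfl,
    finSumFinEquiv_symm_apply_castAdd, finSumFinEquiv_symm_last]
  rfl

theorem stab_apply_lc (M : Matrix (Fin k) (Fin k) E) (j : Fin k) :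
    stab M (Fin.last k) j.castSucc = 0 := by
  rw [stab, Matrix.submatrix_apply]
  rw [show j.castSucc = Fin.castAdd 1 j from rfl,
    finSumFinEquiv_symm_apply_castAdd, finSumFinEquiv_symm_last]
  rfl

theorem stab_apply_ll (M : Matrix (Fin k) (Fin k) E) :
    stab M (Fin.last k) (Fin.last k) = 1 := by
  rw [stab, Matrix.submatrix_apply, finSumFinEquiv_symm_last]
  exact Matrix.one_apply_eq (α := E) (0 : Fin 1)

/-- The distinguished unimodular vector `(0, …, 0, 1)`. -/
def eVec (k : ℕ) (E : Type*) [Ring E] : Fin (k + 1) → E :=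
  fun i => if i = Fin.last k then 1 else 0

theorem eVec_mem_Lg : eVec k E ∈ Lg (k + 1) E := by
  refine ⟨eVec k E, ?_⟩
  have h : ∀ i ∈ Finset.univ, eVec k E i * eVec k E i = if i = Fin.last k then (1:E) else 0 :=
    fun i _ => by by_cases h : i = Fin.last k <;> simp [eVec, h]
  rw [Finset.sum_congr rfl h, Finset.sum_ite_eq' Finset.univ (Fin.last k) (fun _ => (1:E))]
  simp

theorem mulVec_eVec (M : Matrix (Fin (k + 1)) (Fin (k + 1)) E) :
    M *ᵥ eVec k E = fun i => M i (Fin.last k) := by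
  funext i
  show ∑ j, M i j * eVec k E j = M i (Fin.last k)
  rw [Finset.sum_eq_single (Fin.last k)]
  · simp [eVec]
  · intro b _ hb
    simp [eVec, hb]
  · simp

theorem stab_mulVec_eVec (M : Matrix (Fin k) (Fin k) E) :
    stab M *ᵥ eVec k E = eVec k E := by
  rw [mulVec_eVec]
  funext i
  induction i using Fin.lastCases with
  | last => simp [stab_apply_ll, eVec]
  | cast i =>
      rw [stab_apply_cl]
      simp [eVec, (Fin.castSucc_lt_last i).ne]

/-- Strictly-lower "last row" matrix. -/
def lowX {k : ℕ} {E : Type*} [Ring E] (u : Fin (k + 1) → E) :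
    Matrix (Fin (k + 1)) (Fin (k + 1)) E :=
  Matrix.of fun i j => if i = Fin.last k ∧ j ≠ Fin.last k then u j else 0

theorem lowX_apply (u : Fin (k + 1) → E) (i j : Fin (k + 1)) :
    lowX u i j = if i = Fin.last k ∧ j ≠ Fin.last k then u j else 0 := rfl

theorem lowX_mul_self (u : Fin (k + 1) → E) : lowX u * lowX u = 0 := by
  ext i j
  show ∑ l, lowX u i l * lowX u l j = 0
  apply Finset.sum_eq_zero
  intro l _
  rw [lowX_apply, lowX_apply]
  by_cases h1 : i = Fin.last k ∧ l ≠ Fin.last k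
  · rw [if_pos h1, if_neg (fun h2 => h1.2 h2.1), mul_zero]
  · rw [if_neg h1, zero_mul]

theorem map_lowX (f : E →+* F) (u : Fin (k + 1) → E) :
    (lowX u).map f = lowX (f ∘ u) := by
  ext i j
  simp [Matrix.map_apply, lowX_apply, apply_ite f]

theorem one_add_lowX_mulVec_eVec (u : Fin (k + 1) → E) :
    (1 + lowX u) *ᵥ eVec k E = eVec k E := by
  rw [mulVec_eVec]
  funext i
  rw [Matrix.add_apply, lowX_apply, if_neg (fun h => h.2 rfl), add_zero, Matrix.one_apply]
  rfl

theorem map_one_add_matrix (f : E →+* F) (y : Matrix (Fin (k + 1)) (Fin (k + 1)) E) :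
    (1 + y).map f = 1 + y.map f := by
  ext i j
  simp [Matrix.map_apply, Matrix.add_apply, Matrix.one_apply, apply_ite f]

theorem stab_map (f : E →+* F) (M : Matrix (Fin k) (Fin k) E) :
    (stab M).map f = stab (M.map f) := by
  ext i j
  rw [Matrix.map_apply]
  induction i using Fin.lastCases with
  | last =>
      induction j using Fin.lastCases with
      | last => rw [stab_apply_ll, stab_apply_ll, _root_.map_one]
      | cast j => rw [stab_apply_lc, stab_apply_lc, map_zero]
  | cast i =>
      induction j using Fin.lastCases with
      | last => rw [stab_apply_cl, stab_apply_cl, map_zero]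
      | cast j => rw [stab_apply_cc, stab_apply_cc, Matrix.map_apply]

theorem stab_decomp (U : Matrix (Fin (k + 1)) (Fin (k + 1)) E)
    (hcol : ∀ i, U i (Fin.last k) = eVec k E i) :
    stab (U.submatrix Fin.castSucc Fin.castSucc) * (1 + lowX (fun j => U (Fin.last k) j)) = U := by
  set W := U.submatrix Fin.castSucc Fin.castSucc with hW
  rw [mul_add, mul_one]
  ext i j
  rw [Matrix.add_apply]
  have hsum : (stab W * lowX fun j => U (Fin.last k) j) i j
      = stab W i (Fin.last k) * (if j ≠ Fin.last k then U (Fin.last k) j else 0) := by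
    show ∑ l, stab W i l * lowX (fun j => U (Fin.last k) j) l j = _
    rw [Finset.sum_eq_single (Fin.last k)]
    · rw [lowX_apply]
      congr 1
      by_cases h : j ≠ Fin.last k
      · rw [if_pos ⟨rfl, h⟩, if_pos h]
      · rw [if_neg (fun hc => h hc.2), if_neg h]
    · intro b _ hb
      rw [lowX_apply, if_neg (fun hc => hb hc.1), mul_zero]
    · simp
  rw [hsum]
  induction i using Fin.lastCases with
  | last =>
      rw [stab_apply_ll, one_mul]
      induction j using Fin.lastCases with
      | last =>
          rw [stab_apply_ll, if_neg (by simp), add_zero, hcol]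
          simp [eVec]
      | cast j =>
          rw [stab_apply_lc, if_pos (Fin.castSucc_lt_last j).ne, zero_add]
  | cast i =>
      rw [stab_apply_cl, zero_mul, add_zero]
      induction j using Fin.lastCases with
      | last =>
          rw [stab_apply_cl, hcol]
          simp [eVec, (Fin.castSucc_lt_last i).ne]
      | cast j =>
          rw [stab_apply_cc, hW, Matrix.submatrix_apply]

theorem isUnit_of_stab_isUnit {M : Matrix (Fin k) (Fin k) E} (h : IsUnit (stab M)) :
    IsUnit M := by
  rcases isUnit_iff_exists.mp h with ⟨V, hV1, hV2⟩
  refine isUnit_iff_exists.mpr ⟨V.submatrix Fin.castSucc Fin.castSucc, ?_, ?_⟩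
  · ext i j
    have h1 := congrFun (congrFun hV1 i.castSucc) j.castSucc
    have h2 : (stab M * V) i.castSucc j.castSucc
        = (M * V.submatrix Fin.castSucc Fin.castSucc) i j := by
      show ∑ l, stab M i.castSucc l * V l j.castSucc = ∑ l, M i l * V.submatrix _ _ l j
      rw [Fin.sum_univ_castSucc]
      rw [stab_apply_cl, zero_mul, add_zero]
      apply Finset.sum_congr rfl
      intro l _
      rw [stab_apply_cc, Matrix.submatrix_apply]
    rw [← h2, h1, Matrix.one_apply, Matrix.one_apply]
    simp [Fin.castSucc_inj]
  · ext i j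
    have h1 := congrFun (congrFun hV2 i.castSucc) j.castSucc
    have h2 : (V * stab M) i.castSucc j.castSucc
        = (V.submatrix Fin.castSucc Fin.castSucc * M) i j := by
      show ∑ l, V i.castSucc l * stab M l j.castSucc = ∑ l, V.submatrix _ _ i l * M l j
      rw [Fin.sum_univ_castSucc]
      rw [stab_apply_lc, mul_zero, add_zero]
      apply Finset.sum_congr rfl
      intro l _
      rw [stab_apply_cc, Matrix.submatrix_apply]
    rw [← h2, h1, Matrix.one_apply, Matrix.one_apply]
    simp [Fin.castSucc_inj]
end PartE

section PartG
theorem Lg.map {R S : Type*} [Ring R] [Ring S] (f : R →+* S) {n : ℕ} {v : Fin n → R}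
    (hv : v ∈ Lg n R) : (fun i => f (v i)) ∈ Lg n S := by
  obtain ⟨a, ha⟩ := hv
  refine ⟨fun i => f (a i), ?_⟩
  rw [← map_one f, ← ha, map_sum]
  simp [_root_.map_mul]

theorem prod_matrix_eq_one {R S : Type*} [Ring R] [Ring S] {n : ℕ}
    {X : Matrix (Fin n) (Fin n) (R × S)}
    (h1 : X.map (RingHom.fst R S) = 1) (h2 : X.map (RingHom.snd R S) = 1) : X = 1 := by
  ext i j
  · have e1 := congrFun (congrFun h1 i) j
    rw [Matrix.map_apply] at e1
    by_cases hij : i = j <;> simp [Matrix.one_apply, hij] at e1 ⊢ <;> exact e1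
  · have e2 := congrFun (congrFun h2 i) j
    rw [Matrix.map_apply] at e2
    by_cases hij : i = j <;> simp [Matrix.one_apply, hij] at e2 ⊢ <;> exact e2

section Core
variable {B C D : Type*} [CStarAlgebra B] [CStarAlgebra C] [CStarAlgebra D]

theorem exists_unit_mulVec_eVec (δ : B →⋆ₐ[ℂ] D) (γ : C →⋆ₐ[ℂ] D)
    (hγ : Function.Surjective γ) (k : ℕ)
    (hB : IsConnected (Lg (k + 1) B)) (hC : IsConnected (Lg (k + 1) C))
    (hD : pikInj 0 D k)
    (v : Fin (k + 1) → ↥(pullbackAlg δ γ)) (hv : v ∈ Lg (k + 1) ↥(pullbackAlg δ γ)) :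
    ∃ M : Matrix (Fin (k + 1)) (Fin (k + 1)) ↥(pullbackAlg δ γ),
      IsUnit M ∧ M *ᵥ v = eVec k ↥(pullbackAlg δ γ) := by
  classical
  -- the coordinate ring homs
  let ι : ↥(pullbackAlg δ γ) →+* B × C :=
    { toFun := Subtype.val, map_one' := rfl, map_mul' := fun _ _ => rfl,
      map_zero' := rfl, map_add' := fun _ _ => rfl }
  let πB : ↥(pullbackAlg δ γ) →+* B := (RingHom.fst B C).comp ι
  let πC : ↥(pullbackAlg δ γ) →+* C := (RingHom.snd B C).comp ι
  let δR : B →+* D := δ.toAlgHom.toRingHom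
  let γR : C →+* D := γ.toAlgHom.toRingHom
  set vB : Fin (k + 1) → B := fun i => (v i).1.1 with hvBdef
  set vC : Fin (k + 1) → C := fun i => (v i).1.2 with hvCdef
  have hvB : vB ∈ Lg (k + 1) B := Lg.map πB hv
  have hvC : vC ∈ Lg (k + 1) C := Lg.map πC hv
  have hmem : ∀ i, δ (vB i) = γ (vC i) := fun i => (v i).2
  -- move to e over B and C
  obtain ⟨MB, hMBjd, hMBv⟩ := exists_jd_mulVec_eq hB hvB (eVec_mem_Lg (E := B))
  obtain ⟨NC, hNCjd, hNCv⟩ := exists_jd_mulVec_eq hC hvC (eVec_mem_Lg (E := C))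
  -- push to D
  have hδc : Continuous (δR.mapMatrix : Matrix (Fin (k+1)) (Fin (k+1)) B →+*
      Matrix (Fin (k+1)) (Fin (k+1)) D) :=
    continuous_id.matrix_map (map_continuous δ)
  have hγc : Continuous (γR.mapMatrix : Matrix (Fin (k+1)) (Fin (k+1)) C →+*
      Matrix (Fin (k+1)) (Fin (k+1)) D) :=
    continuous_id.matrix_map (map_continuous γ)
  set Md : Matrix (Fin (k+1)) (Fin (k+1)) D := MB.1.map δR with hMddef
  set Nd : Matrix (Fin (k+1)) (Fin (k+1)) D := NC.1.map γR with hNddef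
  have hMdu : IsUnit Md := MB.2.map δR.mapMatrix
  have hNdu : IsUnit Nd := NC.2.map γR.mapMatrix
  have hMdjd : Jd (⟨Md, hMdu⟩ : GLs (k+1) D) := jd_map δR.mapMatrix hδc hMBjd
  have hNdjd : Jd (⟨Nd, hNdu⟩ : GLs (k+1) D) := jd_map γR.mapMatrix hγc hNCjd
  set vD : Fin (k + 1) → D := fun i => δ (vB i) with hvDdef
  have hMdv : Md *ᵥ vD = eVec k D := by
    funext i
    have := (RingHom.map_mulVec δR MB.1 vB i).symm
    calc (Md *ᵥ vD) i = δR ((MB.1 *ᵥ vB) i) := this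
      _ = eVec k D i := by
          rw [hMBv]
          by_cases h : i = Fin.last k <;> simp [eVec, h]
  have hNdv : Nd *ᵥ vD = eVec k D := by
    funext i
    have h2 : (Nd *ᵥ fun j => γ (vC j)) i = γR ((NC.1 *ᵥ vC) i) :=
      (RingHom.map_mulVec γR NC.1 vC i).symm
    have h3 : vD = fun j => γ (vC j) := funext fun j => hmem j
    rw [h3, h2, hNCv]
    by_cases h : i = Fin.last k <;> simp [eVec, h]
  -- U = Md * Nd⁻¹
  set Ud : Matrix (Fin (k+1)) (Fin (k+1)) D := Md * Ring.inverse Nd with hUddef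
  have hUdu : IsUnit Ud := hMdu.mul (isUnit_ringInverse.mpr hNdu)
  have hUjd : Jd (⟨Ud, hUdu⟩ : GLs (k+1) D) := jd_mul hMdjd (jd_inverse hNdjd)
  have hinvv : Ring.inverse Nd *ᵥ eVec k D = vD := by
    rw [← hNdv, mulVec_mulVec, Ring.inverse_mul_cancel _ hNdu, one_mulVec]
  have hUv : Ud *ᵥ eVec k D = eVec k D := by
    rw [hUddef, ← mulVec_mulVec, hinvv, hMdv]
  have hUcol : ∀ i, Ud i (Fin.last k) = eVec k D i := by
    intro i
    have := congrFun hUv i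
    rwa [mulVec_eVec] at this
  -- decompose
  set W : Matrix (Fin k) (Fin k) D := Ud.submatrix Fin.castSucc Fin.castSucc with hWdef
  set u : Fin (k + 1) → D := fun j => Ud (Fin.last k) j with hudef
  have hdec : stab W * (1 + lowX u) = Ud := stab_decomp Ud hUcol
  have hlowu : IsUnit (1 + lowX u) := isUnit_one_add_of_sq_eq_zero (lowX_mul_self u)
  have hstabeq : stab W = Ud * Ring.inverse (1 + lowX u) := by
    rw [← hdec, mul_assoc, Ring.mul_inverse_cancel _ hlowu, mul_one]
  have hstabu : IsUnit (stab W) := by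
    rw [hstabeq]
    exact hUdu.mul (isUnit_ringInverse.mpr hlowu)
  have hWu : IsUnit W := isUnit_of_stab_isUnit hstabu
  have hstabjd : Jd (⟨stab W, hstabu⟩ : GLs (k+1) D) := by
    have h := jd_mul hUjd (jd_inverse (jd_one_add_of_sq_eq_zero (lowX_mul_self u)))
    convert h using 1
    exact Subtype.ext hstabeq
  have hWjd : Joined (GLone k D) (⟨W, hWu⟩ : GLs k D) := by
    apply joined_of_pikInj hD
    have : stabGL (⟨W, hWu⟩ : GLs k D) = ⟨stab W, hstabu⟩ := Subtype.ext rfl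
    rw [this]
    exact hstabjd
  -- lift W and u to C
  obtain ⟨Wt, hWtu, hWtγ⟩ := exists_isUnit_map_eq γ hγ ⟨W, hWu⟩ hWjd
  set ut : Fin (k + 1) → C := fun j => surjInv hγ (u j) with hutdef
  have hutγ : γR ∘ ut = u := funext fun j => surjInv_eq hγ _
  set L : Matrix (Fin (k+1)) (Fin (k+1)) C := stab Wt * (1 + lowX ut) with hLdef
  have hLu : IsUnit L := (stab_isUnit hWtu).mul (isUnit_one_add_of_sq_eq_zero (lowX_mul_self ut))
  have hLγ : L.map γR = Ud := by
    rw [hLdef, Matrix.map_mul, stab_map, map_one_add_matrix, map_lowX, hutγ]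
    rw [show Wt.map γR = W from hWtγ]
    exact hdec
  -- assemble the matrix over A
  set LN : Matrix (Fin (k+1)) (Fin (k+1)) C := L * NC.1 with hLNdef
  have hLNu : IsUnit LN := hLu.mul NC.2
  have hcomm : MB.1.map δR = LN.map γR := by
    rw [hLNdef, Matrix.map_mul, hLγ, hUddef, mul_assoc, Ring.inverse_mul_cancel _ hNdu, mul_one]
  have hLNv : LN *ᵥ vC = eVec k C := by
    rw [hLNdef, ← mulVec_mulVec, hNCv, hLdef, ← mulVec_mulVec,
      one_add_lowX_mulVec_eVec, stab_mulVec_eVec]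
  set Z : Matrix (Fin (k+1)) (Fin (k+1)) (B × C) :=
    Matrix.of fun i j => (MB.1 i j, LN i j) with hZdef
  have hZmem : ∀ i j, Z i j ∈ pullbackAlg δ γ := by
    intro i j
    show δ (MB.1 i j) = γ (LN i j)
    exact congrFun (congrFun hcomm i) j
  set P : Matrix (Fin (k+1)) (Fin (k+1)) ↥(pullbackAlg δ γ) :=
    Matrix.of fun i j => (⟨Z i j, hZmem i j⟩ : ↥(pullbackAlg δ γ)) with hPdef
  have hPZ : P.map ι = Z := by ext i j <;> rfl
  -- the inverse matrix
  set MBi : Matrix (Fin (k+1)) (Fin (k+1)) B := Ring.inverse MB.1 with hMBidef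
  set LNi : Matrix (Fin (k+1)) (Fin (k+1)) C := Ring.inverse LN with hLNidef
  have hinvcomm : MBi.map δR = LNi.map γR := by
    have h1 : MBi.map δR * Md = 1 := by
      rw [hMddef, ← Matrix.map_mul, hMBidef, Ring.inverse_mul_cancel _ MB.2]
      ext i j
      simp [Matrix.map_apply, Matrix.one_apply, apply_ite δR, _root_.map_one, map_zero]
    have h2 : Md * (LNi.map γR) = 1 := by
      rw [hMddef, hcomm, ← Matrix.map_mul, hLNidef, Ring.mul_inverse_cancel _ hLNu]
      ext i j
      simp [Matrix.map_apply, Matrix.one_apply, apply_ite γR, _root_.map_one, map_zero]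
    calc MBi.map δR = MBi.map δR * (Md * LNi.map γR) := by rw [h2, mul_one]
      _ = (MBi.map δR * Md) * LNi.map γR := by rw [mul_assoc]
      _ = LNi.map γR := by rw [h1, one_mul]
  set Z' : Matrix (Fin (k+1)) (Fin (k+1)) (B × C) :=
    Matrix.of fun i j => (MBi i j, LNi i j) with hZ'def
  have hZ'mem : ∀ i j, Z' i j ∈ pullbackAlg δ γ := by
    intro i j
    show δ (MBi i j) = γ (LNi i j)
    exact congrFun (congrFun hinvcomm i) j
  set P' : Matrix (Fin (k+1)) (Fin (k+1)) ↥(pullbackAlg δ γ) :=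
    Matrix.of fun i j => (⟨Z' i j, hZ'mem i j⟩ : ↥(pullbackAlg δ γ)) with hP'def
  have hP'Z : P'.map ι = Z' := by ext i j <;> rfl
  have hZfst : Z.map (RingHom.fst B C) = MB.1 := by ext i j; rfl
  have hZsnd : Z.map (RingHom.snd B C) = LN := by ext i j; rfl
  have hZ'fst : Z'.map (RingHom.fst B C) = MBi := by ext i j; rfl
  have hZ'snd : Z'.map (RingHom.snd B C) = LNi := by ext i j; rfl
  have hone : (1 : Matrix (Fin (k+1)) (Fin (k+1)) ↥(pullbackAlg δ γ)).map ι = 1 := by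
    ext i j <;> by_cases hij : i = j <;>
      simp [Matrix.map_apply, Matrix.one_apply, hij, apply_ite ι, _root_.map_one, map_zero] <;>
      rfl
  have hinj : Function.Injective
      (fun Q : Matrix (Fin (k+1)) (Fin (k+1)) ↥(pullbackAlg δ γ) => Q.map ι) := by
    intro Q Q' h
    apply Matrix.ext
    intro i j
    exact Subtype.ext (show ι (Q i j) = ι (Q' i j) from congrFun (congrFun h i) j)
  have hZZ' : Z * Z' = 1 := by
    apply prod_matrix_eq_one
    · rw [Matrix.map_mul, hZfst, hZ'fst, hMBidef, Ring.mul_inverse_cancel _ MB.2]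
    · rw [Matrix.map_mul, hZsnd, hZ'snd, hLNidef, Ring.mul_inverse_cancel _ hLNu]
  have hZ'Z : Z' * Z = 1 := by
    apply prod_matrix_eq_one
    · rw [Matrix.map_mul, hZfst, hZ'fst, hMBidef, Ring.inverse_mul_cancel _ MB.2]
    · rw [Matrix.map_mul, hZsnd, hZ'snd, hLNidef, Ring.inverse_mul_cancel _ hLNu]
  have hPu : IsUnit P := by
    refine isUnit_iff_exists.mpr ⟨P', ?_, ?_⟩
    · apply hinj
      show (P * P').map ι = (1 : Matrix _ _ ↥(pullbackAlg δ γ)).map ι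
      rw [Matrix.map_mul, hPZ, hP'Z, hZZ', hone]
    · apply hinj
      show (P' * P).map ι = (1 : Matrix _ _ ↥(pullbackAlg δ γ)).map ι
      rw [Matrix.map_mul, hPZ, hP'Z, hZ'Z, hone]
  refine ⟨P, hPu, ?_⟩
  funext i
  apply Subtype.ext
  have hmap : ι ((P *ᵥ v) i) = (P.map ι *ᵥ fun j => ι (v j)) i := RingHom.map_mulVec ι P v i
  have hfinal : ι ((P *ᵥ v) i) = ((MB.1 *ᵥ vB) i, (LN *ᵥ vC) i) := by
    rw [hmap, hPZ]
    refine Prod.ext_iff.mpr ⟨?_, ?_⟩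
    · calc ((Z *ᵥ fun j => ι (v j)) i).1
          = (RingHom.fst B C) (∑ j, Z i j * ι (v j)) := rfl
        _ = ∑ j, (RingHom.fst B C) (Z i j * ι (v j)) := map_sum _ _ _
        _ = (MB.1 *ᵥ vB) i := rfl
    · calc ((Z *ᵥ fun j => ι (v j)) i).2
          = (RingHom.snd B C) (∑ j, Z i j * ι (v j)) := rfl
        _ = ∑ j, (RingHom.snd B C) (Z i j * ι (v j)) := map_sum _ _ _
        _ = (LN *ᵥ vC) i := rfl
  calc ((P *ᵥ v) i : B × C) = ι ((P *ᵥ v) i) := rfl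
    _ = ((MB.1 *ᵥ vB) i, (LN *ᵥ vC) i) := hfinal
    _ = (eVec k B i, eVec k C i) := by rw [hMBv, hLNv]
    _ = ((eVec k ↥(pullbackAlg δ γ) i : ↥(pullbackAlg δ γ)) : B × C) := by
        by_cases h : i = Fin.last k
        · simp only [eVec, if_pos h]
          rfl
        · simp only [eVec, if_neg h]
          rfl
end Core
end PartG

section PartF
theorem rank_le_extract {P : ℕ → Prop} (hmono : ∀ a b : ℕ, a ≤ b → P a → P b) {r : ℕ}
    (h : sInf {N : ℕ∞ | ∃ n : ℕ, N = n ∧ 1 ≤ n ∧ P n} ≤ (r : ℕ∞)) (hr : 1 ≤ r) : P r := by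
  by_contra hc
  have hge : ∀ N ∈ {N : ℕ∞ | ∃ n : ℕ, N = n ∧ 1 ≤ n ∧ P n}, ((r : ℕ∞) + 1) ≤ N := by
    rintro N ⟨n, rfl, h1, hn⟩
    have hrn : r < n := by
      by_contra hle
      push_neg at hle
      exact hc (hmono n r hle hn)
    exact_mod_cast Nat.succ_le_of_lt hrn
  have h2 := le_trans (le_sInf hge) h
  have h3 : (r : ℕ∞) < (r : ℕ∞) + 1 := by
    exact_mod_cast Nat.lt_succ_self r
  exact absurd (lt_of_lt_of_le h3 h2) (lt_irrefl _)

theorem one_le_rank_set (S : Set ℕ∞) (hS : ∀ N ∈ S, ∃ n : ℕ, N = n ∧ 1 ≤ n) :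
    (1 : ℕ∞) ≤ sInf S := by
  apply le_sInf
  intro N hN
  obtain ⟨n, rfl, h1⟩ := hS N hN
  exact_mod_cast h1

/-- Transfer `GLtrans` along a ring isomorphism. -/
theorem GLtrans_of_equiv {A A' : Type*} [Ring A] [Ring A'] (e : A ≃+* A') {m : ℕ}
    (h : GLtrans m A) : GLtrans m A' := by
  intro v hv w hw
  have hLg : ∀ x : Fin m → A', x ∈ Lg m A' → (fun i => e.symm (x i)) ∈ Lg m A := by
    rintro x ⟨a, ha⟩
    refine ⟨fun i => e.symm (a i), ?_⟩
    have : ∑ i, e.symm (a i) * e.symm (x i) = e.symm (∑ i, a i * x i) := by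
      rw [map_sum]
      exact Finset.sum_congr rfl fun i _ => (map_mul e.symm _ _).symm
    rw [this, ha, _root_.map_one]
  obtain ⟨M, hMu, hMv⟩ := h _ (hLg v hv) _ (hLg w hw)
  refine ⟨M.map e, hMu.map (RingHom.mapMatrix (e : A →+* A')), ?_⟩
  funext i
  have h1 : e ((M *ᵥ fun i => e.symm (v i)) i) = (M.map e *ᵥ fun j => e (e.symm (v j))) i :=
    RingHom.map_mulVec (e : A →+* A') M _ i
  have h2 : (fun j => e (e.symm (v j))) = v := funext fun j => e.apply_symm_apply (v j)
  rw [h2] at h1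
  rw [← h1, hMv]
  exact e.apply_symm_apply (w i)

/-- The swap isomorphism between the two pullbacks. -/
def pullbackSwap {B C D : Type*} [Ring B] [Ring C] [Ring D]
    [Algebra ℂ B] [Algebra ℂ C] [Algebra ℂ D]
    [StarRing B] [StarRing C] [StarRing D]
    [StarModule ℂ B] [StarModule ℂ C] [StarModule ℂ D]
    (δ : B →⋆ₐ[ℂ] D) (γ : C →⋆ₐ[ℂ] D) :
    ↥(pullbackAlg γ δ) ≃+* ↥(pullbackAlg δ γ) where
  toFun x := ⟨⟨x.1.2, x.1.1⟩, (x.2 : γ x.1.1 = δ x.1.2).symm⟩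
  invFun x := ⟨⟨x.1.2, x.1.1⟩, (x.2 : δ x.1.1 = γ x.1.2).symm⟩
  left_inv x := rfl
  right_inv x := rfl
  map_mul' x y := rfl
  map_add' x y := rfl

theorem glTrans_core {B C D : Type*} [CStarAlgebra B] [CStarAlgebra C] [CStarAlgebra D]
    (δ : B →⋆ₐ[ℂ] D) (γ : C →⋆ₐ[ℂ] D) (hγ : Function.Surjective γ) (k : ℕ)
    (hB : IsConnected (Lg (k + 1) B)) (hC : IsConnected (Lg (k + 1) C))
    (hD : pikInj 0 D k) : GLtrans (k + 1) ↥(pullbackAlg δ γ) := by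
  intro v hv w hw
  obtain ⟨Mv, hMvu, hMve⟩ := exists_unit_mulVec_eVec δ γ hγ k hB hC hD v hv
  obtain ⟨Mw, hMwu, hMwe⟩ := exists_unit_mulVec_eVec δ γ hγ k hB hC hD w hw
  refine ⟨Ring.inverse Mw * Mv, (isUnit_ringInverse.mpr hMwu).mul hMvu, ?_⟩
  rw [← Matrix.mulVec_mulVec, hMve, ← hMwe, Matrix.mulVec_mulVec,
    Ring.inverse_mul_cancel _ hMwu, Matrix.one_mulVec]

theorem gsr_pullback_le' {B C D : Type*} [CStarAlgebra B] [CStarAlgebra C] [CStarAlgebra D]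
    (δ : B →⋆ₐ[ℂ] D) (γ : C →⋆ₐ[ℂ] D)
    (hsurj : Function.Surjective γ ∨ Function.Surjective δ) :
    gsr ↥(pullbackAlg δ γ) ≤ max (csr B) (max (csr C) (injRank 0 D)) := by
  set R := max (csr B) (max (csr C) (injRank 0 D)) with hR
  rcases eq_or_ne R ⊤ with htop | hne
  · rw [htop]; exact le_top
  obtain ⟨r, hr⟩ : ∃ r : ℕ, R = (r : ℕ∞) := by
    obtain ⟨r, hr⟩ := WithTop.ne_top_iff_exists.mp hne
    exact ⟨r, hr.symm⟩
  have h1B : (1 : ℕ∞) ≤ csr B := one_le_rank_set _ (by rintro N ⟨n, rfl, h1, _⟩; exact ⟨n, rfl, h1⟩)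
  have hr1 : 1 ≤ r := by
    have : (1 : ℕ∞) ≤ (r : ℕ∞) := le_trans h1B (hr ▸ le_max_left _ _)
    exact_mod_cast this
  have hcsrB : csr B ≤ (r : ℕ∞) := hr ▸ le_max_left _ _
  have hcsrC : csr C ≤ (r : ℕ∞) := hr ▸ le_trans (le_max_left _ _) (le_max_right _ _)
  have hinj : injRank 0 D ≤ (r : ℕ∞) := hr ▸ le_trans (le_max_right _ _) (le_max_right _ _)
  have hB : ∀ m : ℕ, r ≤ m → IsConnected (Lg m B) := by
    have := rank_le_extract (P := fun n => ∀ m : ℕ, n ≤ m → IsConnected (Lg m B))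
      (fun a b hab hP m hm => hP m (le_trans hab hm)) hcsrB hr1
    exact this
  have hC : ∀ m : ℕ, r ≤ m → IsConnected (Lg m C) := by
    exact rank_le_extract (P := fun n => ∀ m : ℕ, n ≤ m → IsConnected (Lg m C))
      (fun a b hab hP m hm => hP m (le_trans hab hm)) hcsrC hr1
  have hD : ∀ m : ℕ, r ≤ m + 1 → pikInj 0 D m := by
    exact rank_le_extract (P := fun n => ∀ m : ℕ, n ≤ m + 1 → pikInj 0 D m)
      (fun a b hab hP m hm => hP m (le_trans hab hm)) hinj hr1
  rw [hr]
  apply sInf_le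
  refine ⟨r, rfl, hr1, fun m hm => ?_⟩
  obtain ⟨k, rfl⟩ : ∃ k, m = k + 1 := ⟨m - 1, by omega⟩
  have hBc := hB _ hm
  have hCc := hC _ hm
  have hDk := hD k (by omega)
  rcases hsurj with hγ | hδ
  · exact glTrans_core δ γ hγ k hBc hCc hDk
  · exact GLtrans_of_equiv (pullbackSwap δ γ) (glTrans_core γ δ hδ k hCc hBc hDk)
end PartF

/-- **Theorem.** For a pullback `A = B ⊕_D C` of unital C*-algebras along `δ : B → D`,
`γ : C → D` with `γ` or `δ` surjective, one has
`gsr(A) ≤ max {csr(B), csr(C), inj_0(D)}`. -/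
theorem gsr_pullback_le {B C D : Type*} [CStarAlgebra B] [CStarAlgebra C] [CStarAlgebra D]
    (δ : B →⋆ₐ[ℂ] D) (γ : C →⋆ₐ[ℂ] D)
    (hsurj : Function.Surjective γ ∨ Function.Surjective δ) :
    gsr ↥(pullbackAlg δ γ) ≤ max (csr B) (max (csr C) (injRank 0 D)) :=
  gsr_pullback_le' δ γ hsurj

end
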